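/- Let H = H1 ⊗ H' with dim H1 = 2, and let {|a_{s,1}⟩ ⊗ |a'_s⟩ : s = 1,...,D} be an orthogonal product basis of H. Let V be a line in H1 occurring among the lines [a_{s,1}], let P = {s : [a_{s,1}] = V} and Q = {s : [a_{s,1}] = V^⊥}. Then the subspace of H' spanned by {|a'_s⟩ : s ∈ P} equals the subspace spanned by {|a'_s⟩ : s ∈ Q}. -/

import Mathlib

/-- Concrete tensor product of two vectors in Euclidean spaces. -/
noncomputable def tensor2 {ι κ : Type*} [Fintype ι] [Fintype κ]
    (a : EuclideanSpace ℂ ι) (b : EuclideanSpace ℂ κ) :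
    EuclideanSpace ℂ (ι × κ) :=
  WithLp.toLp 2 (fun p : ι × κ => a p.1 * b p.2)

/-! For `t` with `[a_t]` neither `V` nor `Vᗮ`, the vector `a_t` is orthogonal to no `a_s` with
`s ∈ P ∪ Q` (in dimension two, `a_t ⊥ a_s` forces `[a_t] = [a_s]ᗮ`), so orthonormality of the
basis forces `b_t ⊥ b_s`. Completeness of the basis makes the `b_t` with `a_t` not orthogonal to a
fixed nonzero `v ∈ V` span `H'`; these are indexed by `P ∪ R`, where `R` is the complement of
`P ∪ Q`. Hence `span b(P)` is the orthogonal complement of `span b(R)`, and by the same argument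
for `Vᗮ` so is `span b(Q)`. -/

open scoped InnerProductSpace
open Module Submodule

section Tensor

variable {ι κ : Type*} [Fintype ι] [Fintype κ]

lemma inner_tensor2 (a c : EuclideanSpace ℂ ι) (b d : EuclideanSpace ℂ κ) :
    ⟪tensor2 a b, tensor2 c d⟫_ℂ = ⟪a, c⟫_ℂ * ⟪b, d⟫_ℂ := by
  simp only [tensor2, PiLp.inner_apply, RCLike.inner_apply, map_mul]
  rw [Finset.sum_mul_sum, ← Finset.sum_product']
  exact Finset.sum_congr rfl fun _ _ => by ring

lemma tensor2_eq_zero_iff {a : EuclideanSpace ℂ ι} {b : EuclideanSpace ℂ κ} :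
    tensor2 a b = 0 ↔ a = 0 ∨ b = 0 := by
  rw [← inner_self_eq_zero (𝕜 := ℂ), inner_tensor2, mul_eq_zero, inner_self_eq_zero,
    inner_self_eq_zero]

variable {σ : Type*} {a : σ → EuclideanSpace ℂ ι} {b : σ → EuclideanSpace ℂ κ}

lemma Orthonormal.tensor2_left_ne_zero (h : Orthonormal ℂ fun s => tensor2 (a s) (b s))
    (s : σ) : a s ≠ 0 :=
  fun h0 => h.ne_zero s (tensor2_eq_zero_iff.2 (Or.inl h0))

lemma Orthonormal.inner_tensor2_right_eq_zero (h : Orthonormal ℂ fun s => tensor2 (a s) (b s))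
    {s t : σ} (hst : s ≠ t) (ha : ⟪a s, a t⟫_ℂ ≠ 0) : ⟪b s, b t⟫_ℂ = 0 := by
  have h0 : ⟪tensor2 (a s) (b s), tensor2 (a t) (b t)⟫_ℂ = 0 := h.2 hst
  rw [inner_tensor2] at h0
  exact (mul_eq_zero.1 h0).resolve_left ha

lemma span_image_inner_ne_zero_eq_top
    (hspan : span ℂ (Set.range fun s => tensor2 (a s) (b s)) = ⊤)
    {v : EuclideanSpace ℂ ι} (hv : v ≠ 0) :
    span ℂ (b '' {t | ⟪a t, v⟫_ℂ ≠ 0}) = ⊤ := by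
  rw [← orthogonal_eq_bot_iff, eq_bot_iff]
  intro c hc
  have hvc : span ℂ (Set.range fun s => tensor2 (a s) (b s)) ⟂ ℂ ∙ tensor2 v c := by
    refine isOrtho_span.2 ?_
    rintro _ ⟨t, rfl⟩ _ rfl
    rw [inner_tensor2]
    by_cases hat : ⟪a t, v⟫_ℂ = 0
    · rw [hat, zero_mul]
    · rw [inner_right_of_mem_orthogonal (subset_span (Set.mem_image_of_mem b hat)) hc, mul_zero]
  rw [hspan, isOrtho_top_left, span_singleton_eq_bot, tensor2_eq_zero_iff] at hvc
  exact hvc.resolve_left hv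

end Tensor

section Dimension2

variable {𝕜 E : Type*} [RCLike 𝕜] [NormedAddCommGroup E] [InnerProductSpace 𝕜 E]
  [FiniteDimensional 𝕜 E]

lemma finrank_orthogonal_span_singleton_of_finrank_eq_two (hE : finrank 𝕜 E = 2) {x : E}
    (hx : x ≠ 0) : finrank 𝕜 (𝕜 ∙ x)ᗮ = 1 :=
  finrank_add_finrank_orthogonal' (by rw [finrank_span_singleton hx, hE])

lemma span_singleton_eq_orthogonal_of_inner_eq_zero (hE : finrank 𝕜 E = 2) {x y : E}
    (hx : x ≠ 0) (hy : y ≠ 0) (h : ⟪x, y⟫_𝕜 = 0) : 𝕜 ∙ y = (𝕜 ∙ x)ᗮ :=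
  eq_of_le_of_finrank_le
    ((span_singleton_le_iff_mem _ _).2 (mem_orthogonal_singleton_iff_inner_right.2 h))
    (by rw [finrank_orthogonal_span_singleton_of_finrank_eq_two hE hx, finrank_span_singleton hy])

end Dimension2

theorem span_image_eq_orthogonal_span_image_of_ne_bot {κ σ : Type*} [Fintype κ]
    {a : σ → EuclideanSpace ℂ (Fin 2)} {b : σ → EuclideanSpace ℂ κ}
    (honb : Orthonormal ℂ fun s => tensor2 (a s) (b s))
    (hspan : span ℂ (Set.range fun s => tensor2 (a s) (b s)) = ⊤)
    {V : Submodule ℂ (EuclideanSpace ℂ (Fin 2))} (hV : V ≠ ⊥) :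
    span ℂ (b '' {s | ℂ ∙ a s = V}) = (span ℂ (b '' {t | ℂ ∙ a t ≠ V ∧ ℂ ∙ a t ≠ Vᗮ}))ᗮ := by
  set P := {s | ℂ ∙ a s = V}
  set R := {t | ℂ ∙ a t ≠ V ∧ ℂ ∙ a t ≠ Vᗮ}
  have hE : finrank ℂ (EuclideanSpace ℂ (Fin 2)) = 2 := finrank_euclideanSpace_fin
  have hPR : span ℂ (b '' P) ≤ (span ℂ (b '' R))ᗮ := by
    refine isOrtho_span.2 ?_
    rintro _ ⟨s, hs, rfl⟩ _ ⟨t, ht, rfl⟩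
    refine honb.inner_tensor2_right_eq_zero (fun hst => ht.1 (hst ▸ hs)) fun h => ht.2 ?_
    rw [← hs]
    exact span_singleton_eq_orthogonal_of_inner_eq_zero hE (honb.tensor2_left_ne_zero s)
      (honb.tensor2_left_ne_zero t) h
  have hPR_top : span ℂ (b '' P) ⊔ span ℂ (b '' R) = ⊤ := by
    obtain ⟨v, hvV, hv⟩ := exists_mem_ne_zero_of_ne_bot hV
    rw [← span_union, ← Set.image_union, eq_top_iff, ← span_image_inner_ne_zero_eq_top hspan hv]
    refine span_mono (Set.image_mono fun t hat => ?_)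
    by_contra htPR
    have hatQ : ℂ ∙ a t = Vᗮ := by
      by_contra htQ
      exact htPR (Or.inr ⟨fun htP => htPR (Or.inl htP), htQ⟩)
    exact hat (inner_left_of_mem_orthogonal hvV (hatQ ▸ mem_span_singleton_self _))
  refine eq_of_le_of_inf_le_of_sup_le hPR ?_ (by rw [hPR_top]; exact le_top)
  rw [inf_comm, inf_orthogonal_eq_bot]
  exact bot_le

theorem stmt4_general (d : ℕ)
    (a : Fin (2 * d) → EuclideanSpace ℂ (Fin 2))
    (b : Fin (2 * d) → EuclideanSpace ℂ (Fin d))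
    (honb : Orthonormal ℂ (fun s => tensor2 (a s) (b s)))
    (hspan : Submodule.span ℂ (Set.range fun s => tensor2 (a s) (b s)) = ⊤)
    (V : Submodule ℂ (EuclideanSpace ℂ (Fin 2)))
    (hV : ∃ s, V = ℂ ∙ a s) :
    Submodule.span ℂ (b '' {s | (ℂ ∙ a s) = V})
      = Submodule.span ℂ (b '' {s | (ℂ ∙ a s) = Submodule.orthogonal V}) := by
  obtain ⟨s₀, rfl⟩ := hV
  have ha₀ := honb.tensor2_left_ne_zero s₀
  have hV : ℂ ∙ a s₀ ≠ ⊥ := by rwa [Ne, span_singleton_eq_bot]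
  have hVperp : (ℂ ∙ a s₀)ᗮ ≠ ⊥ := by
    rw [Ne, ← finrank_eq_zero, finrank_orthogonal_span_singleton_of_finrank_eq_two
      finrank_euclideanSpace_fin ha₀]
    exact one_ne_zero
  rw [span_image_eq_orthogonal_span_image_of_ne_bot honb hspan hV,
    span_image_eq_orthogonal_span_image_of_ne_bot honb hspan hVperp, orthogonal_orthogonal]
  simp only [and_comm]

/-- Let `{a_s ⊗ b_s}` be an orthogonal product basis of `ℂ² ⊗ H'`, let `V` be a line occurring
among the lines `[a_s]`, and set `P = {s : [a_s] = V}`, `Q = {s : [a_s] = Vᗮ}`. Then the span of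
`{b_s : s ∈ P}` equals the span of `{b_s : s ∈ Q}`. -/
theorem stmt4 (d : ℕ)
    (a : Fin (2 * d) → EuclideanSpace ℂ (Fin 2))
    (b : Fin (2 * d) → EuclideanSpace ℂ (Fin d))
    (ha : ∀ s, ‖a s‖ = 1) (hb : ∀ s, ‖b s‖ = 1)
    (honb : Orthonormal ℂ (fun s => tensor2 (a s) (b s)))
    (hspan : Submodule.span ℂ (Set.range fun s => tensor2 (a s) (b s)) = ⊤)
    (V : Submodule ℂ (EuclideanSpace ℂ (Fin 2)))
    (hV : ∃ s, V = ℂ ∙ a s) :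
    Submodule.span ℂ (b '' {s | (ℂ ∙ a s) = V})
      = Submodule.span ℂ (b '' {s | (ℂ ∙ a s) = Submodule.orthogonal V}) :=
  stmt4_general d a b honb hspan V hV
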